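/- arXiv:1604.06329 — 2 statements merged into one kernel-verified Lean document; each statement's English description precedes it below -/
import Mathlib

section
/- Let (X, I, q, g) be a deterministic commutative MDP such that for every x ∈ X the MDP starting at x has a uniform value in pure strategies v*(x). Then for every x₁ ∈ X and every ε > 0 there exists a pure strategy a ∈ I^ℕ such that liminf_{n→∞} γ_n(x₁, a) ≥ v*(x₁) − ε and such that the value is constant on the induced play: v*(x_t) = v*(x₁) for every t ≥ 1, where (x_t)_{t≥1} is the play induced by a from x₁. -/
/-!
Playing an action never increases the uniform value: prefixing an `η`-optimal strategy of
`q x i` with `i` changes the average payoffs by `O(1/n)`, so `v (q x i) ≤ v x`. By commutativity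
the state reached from `x₁` depends only on the multiset of actions played, and the uniform value
is antitone in this multiset. Multisets over the finite action set are well-quasi-ordered
(Dickson's lemma), so the values of reachable states below `v x₁` stay below `v x₁ - δ` for some
`δ > 0`. Every tail of an `η`-optimal strategy is again `η`-optimal from the state where it
starts, so for `η < δ` the value along the play never drops below `v x₁ - δ`, hence equals `v x₁`.
-/

open Filter Topology

noncomputable section

/-- The play induced by an initial state `x₁` and a pure strategy `a` in a deterministic MDP:
`x₀ = x₁` and `x_{t+1} = q (x_t) (a t)`. -/
def play {X I : Type*} (q : X → I → X) (x₁ : X) (a : ℕ → I) : ℕ → X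
  | 0 => x₁
  | t + 1 => q (play q x₁ a t) (a t)

/-- The `n`-stage average payoff `γ_n(x₁, a)`. -/
def payoff {X I : Type*} (q : X → I → X) (g : X → I → ℝ) (x₁ : X) (a : ℕ → I) (n : ℕ) : ℝ :=
  (1 / (n : ℝ)) * ∑ t ∈ Finset.range n, g (play q x₁ a t) (a t)

/-- The `n`-stage value `v_n(x₁)`. -/
def nValue {X I : Type*} (q : X → I → X) (g : X → I → ℝ) (x₁ : X) (n : ℕ) : ℝ :=
  ⨆ a : ℕ → I, payoff q g x₁ a n

/-- The MDP starting at `x₁` has a uniform value `v` in pure strategies. -/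
def HasUniformValuePure {X I : Type*} (q : X → I → X) (g : X → I → ℝ) (x₁ : X) (v : ℝ) : Prop :=
  (∀ ε > (0 : ℝ), ∃ a : ℕ → I, v - ε ≤ liminf (fun n => payoff q g x₁ a n) atTop) ∧
    limsup (fun n => nValue q g x₁ n) atTop ≤ v

instance Multiset.wellQuasiOrderedLE {α : Type*} [Finite α] :
    WellQuasiOrderedLE (Multiset α) := by
  classical
  exact Finsupp.orderIsoMultiset.monotone.wellQuasiOrderedLE_of_wellQuasiOrderedLE_of_surjective
    Finsupp.orderIsoMultiset.surjective

theorem Antitone.exists_pos_forall_le_sub_of_lt {α : Type*} [Preorder α] [WellQuasiOrderedLE α]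
    {f : α → ℝ} (hf : Antitone f) (c : ℝ) : ∃ δ > 0, ∀ x, f x < c → f x ≤ c - δ := by
  set S : Set ℝᵒᵈ := (OrderDual.toDual ∘ f) '' {x | f x < c}
  have hS : S.IsWF :=
    ((Set.isPWO_of_wellQuasiOrderedLE _).image_of_monotone hf.dual_right).isWF
  rcases S.eq_empty_or_nonempty with hempty | hne
  · refine ⟨1, one_pos, fun x hx => ?_⟩
    have : OrderDual.toDual (f x) ∈ S := Set.mem_image_of_mem _ hx
    simp [hempty] at this
  · obtain ⟨x₀, hx₀, hmin⟩ := hS.min_mem hne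
    refine ⟨c - f x₀, sub_pos.2 hx₀, fun x hx => ?_⟩
    have : hS.min hne ≤ OrderDual.toDual (f x) := hS.min_le hne (Set.mem_image_of_mem _ hx)
    rw [← hmin] at this
    simpa using this

theorem Filter.liminf_add_of_tendsto_zero {ι : Type*} {F : Filter ι} [F.NeBot] {u v : ι → ℝ}
    (hu : Tendsto u F (𝓝 0)) (hv₀ : IsBoundedUnder (· ≥ ·) F v)
    (hv₁ : IsBoundedUnder (· ≤ ·) F v) : liminf (u + v) F = liminf v F := by
  refine le_antisymm ?_ ?_
  · calc liminf (u + v) F ≤ limsup u F + liminf v F :=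
          liminf_add_le hu.isBoundedUnder_ge hu.isBoundedUnder_le hv₀ hv₁.isCoboundedUnder_ge
      _ = liminf v F := by rw [hu.limsup_eq, zero_add]
  · calc liminf v F = liminf u F + liminf v F := by rw [hu.liminf_eq, zero_add]
      _ ≤ liminf (u + v) F :=
          le_liminf_add hu.isBoundedUnder_ge hu.isBoundedUnder_le hv₀ hv₁.isCoboundedUnder_ge

section MDP

variable {X I : Type*} {q : X → I → X} {g : X → I → ℝ}

theorem play_add (x : X) (a : ℕ → I) (t : ℕ) :
    ∀ s, play q x a (s + t) = play q (play q x a t) (fun s => a (s + t)) s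
  | 0 => by simp [play]
  | s + 1 => by
    rw [Nat.add_right_comm]
    simp only [play, play_add x a t s]

theorem mul_payoff (x : X) (a : ℕ → I) (n : ℕ) :
    n * payoff q g x a n = ∑ t ∈ Finset.range n, g (play q x a t) (a t) := by
  rcases Nat.eq_zero_or_pos n with rfl | hn
  · simp
  · rw [payoff, ← mul_assoc, mul_one_div_cancel (by positivity), one_mul]

theorem sum_g_play_mem_Icc (hg : ∀ x i, g x i ∈ Set.Icc (0 : ℝ) 1) (x : X) (a : ℕ → I)
    (n : ℕ) : ∑ t ∈ Finset.range n, g (play q x a t) (a t) ∈ Set.Icc (0 : ℝ) n :=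
  ⟨Finset.sum_nonneg fun t _ => (hg _ _).1, by
    simpa using Finset.sum_le_sum fun t (_ : t ∈ Finset.range n) => (hg (play q x a t) (a t)).2⟩

theorem payoff_mem_Icc (hg : ∀ x i, g x i ∈ Set.Icc (0 : ℝ) 1) (x : X) (a : ℕ → I) (n : ℕ) :
    payoff q g x a n ∈ Set.Icc (0 : ℝ) 1 := by
  rcases Nat.eq_zero_or_pos n with rfl | hn
  · simp [payoff]
  have hS := sum_g_play_mem_Icc (q := q) hg x a n
  refine ⟨mul_nonneg (by positivity) hS.1, ?_⟩
  rw [payoff, one_div, inv_mul_le_iff₀ (by exact_mod_cast hn), mul_one]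
  exact hS.2

theorem abs_payoff_add_sub_le (hg : ∀ x i, g x i ∈ Set.Icc (0 : ℝ) 1)
    (x : X) (a : ℕ → I) (t n : ℕ) :
    |payoff q g x a (n + t) - payoff q g (play q x a t) (fun s => a (s + t)) n|
      ≤ t / ((n + t : ℕ) : ℝ) := by
  set p := payoff q g (play q x a t) (fun s => a (s + t)) n
  set B := ∑ k ∈ Finset.range t, g (play q x a k) (a k)
  rcases Nat.eq_zero_or_pos (n + t) with hnt | hnt
  · obtain ⟨rfl, rfl⟩ : n = 0 ∧ t = 0 := by omega
    simp [p, payoff]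
  have hN : (0 : ℝ) < ((n + t : ℕ) : ℝ) := by exact_mod_cast hnt
  have hsplit : ((n + t : ℕ) : ℝ) * payoff q g x a (n + t) = B + n * p := by
    rw [mul_payoff, mul_payoff, add_comm n t, Finset.sum_range_add]
    simp only [add_comm t, play_add]
    rfl
  have hB : B ∈ Set.Icc (0 : ℝ) t := sum_g_play_mem_Icc hg x a t
  have hp : p ∈ Set.Icc (0 : ℝ) 1 := payoff_mem_Icc hg _ _ _
  have hdiff : payoff q g x a (n + t) - p = (B - t * p) / ((n + t : ℕ) : ℝ) := by
    rw [eq_div_iff hN.ne', sub_mul, mul_comm, hsplit]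
    push_cast
    ring
  rw [hdiff, abs_div, abs_of_pos hN]
  gcongr
  rw [abs_le]
  constructor <;> nlinarith [hB.1, hB.2, hp.1, hp.2]

theorem liminf_payoff_shift (hg : ∀ x i, g x i ∈ Set.Icc (0 : ℝ) 1)
    (x : X) (a : ℕ → I) (t : ℕ) :
    liminf (fun n => payoff q g (play q x a t) (fun s => a (s + t)) n) atTop
      = liminf (fun n => payoff q g x a n) atTop := by
  have hdiff : Tendsto (fun n => payoff q g x a (n + t)
      - payoff q g (play q x a t) (fun s => a (s + t)) n) atTop (𝓝 0) :=
    squeeze_zero_norm (fun n => abs_payoff_add_sub_le hg x a t n)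
      ((tendsto_const_div_atTop_nhds_zero_nat (t : ℝ)).comp (tendsto_add_atTop_nat t))
  calc liminf (fun n => payoff q g (play q x a t) (fun s => a (s + t)) n) atTop
      = liminf ((fun n => payoff q g x a (n + t)
          - payoff q g (play q x a t) (fun s => a (s + t)) n)
          + fun n => payoff q g (play q x a t) (fun s => a (s + t)) n) atTop :=
        (liminf_add_of_tendsto_zero hdiff
          (isBoundedUnder_of ⟨0, fun n => (payoff_mem_Icc hg _ _ n).1⟩)
          (isBoundedUnder_of ⟨1, fun n => (payoff_mem_Icc hg _ _ n).2⟩)).symm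
    _ = liminf (fun n => payoff q g x a (n + t)) atTop := by
        congr 1; ext n; exact sub_add_cancel _ _
    _ = liminf (fun n => payoff q g x a n) atTop := liminf_nat_add _ t

theorem payoff_le_nValue (hg : ∀ x i, g x i ∈ Set.Icc (0 : ℝ) 1) (x : X) (a : ℕ → I) (n : ℕ) :
    payoff q g x a n ≤ nValue q g x n :=
  le_ciSup (f := fun b => payoff q g x b n)
    ⟨1, by rintro _ ⟨b, rfl⟩; exact (payoff_mem_Icc hg x b n).2⟩ a

theorem liminf_payoff_le (hg : ∀ x i, g x i ∈ Set.Icc (0 : ℝ) 1) {x : X} {w : ℝ}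
    (hw : HasUniformValuePure q g x w) (a : ℕ → I) :
    liminf (fun n => payoff q g x a n) atTop ≤ w := by
  have hlo : IsBoundedUnder (· ≥ ·) atTop fun n => payoff q g x a n :=
    isBoundedUnder_of ⟨0, fun n => (payoff_mem_Icc hg x a n).1⟩
  have hhi : IsBoundedUnder (· ≤ ·) atTop fun n => payoff q g x a n :=
    isBoundedUnder_of ⟨1, fun n => (payoff_mem_Icc hg x a n).2⟩
  calc liminf (fun n => payoff q g x a n) atTop
      ≤ limsup (fun n => payoff q g x a n) atTop := liminf_le_limsup hhi hlo
    _ ≤ limsup (fun n => nValue q g x n) atTop :=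
        limsup_le_limsup (Eventually.of_forall fun n => payoff_le_nValue hg x a n)
          hlo.isCoboundedUnder_le
          (isBoundedUnder_of ⟨1, fun n =>
            Real.iSup_le (fun b => (payoff_mem_Icc hg x b n).2) zero_le_one⟩)
    _ ≤ w := hw.2

variable {v : X → ℝ}

theorem value_step_le (hg : ∀ x i, g x i ∈ Set.Icc (0 : ℝ) 1)
    (hv : ∀ x, HasUniformValuePure q g x (v x)) (x : X) (i : I) : v (q x i) ≤ v x := by
  refine le_of_forall_pos_le_add fun η hη => ?_
  obtain ⟨b, hb⟩ := (hv (q x i)).1 η hη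
  let c : ℕ → I := Stream'.cons i b
  calc v (q x i) ≤ liminf (fun n => payoff q g (q x i) b n) atTop + η := by linarith
    _ = liminf (fun n => payoff q g (play q x c 1) (fun s => c (s + 1)) n) atTop + η := rfl
    _ = liminf (fun n => payoff q g x c n) atTop + η := by rw [liminf_payoff_shift hg x c 1]
    _ ≤ v x + η := by gcongr; exact liminf_payoff_le hg (hv x) c

variable [RightCommutative q]

theorem value_foldl_le (hg : ∀ x i, g x i ∈ Set.Icc (0 : ℝ) 1)
    (hv : ∀ x, HasUniformValuePure q g x (v x)) (m : Multiset I) (x : X) :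
    v (m.foldl q x) ≤ v x := by
  induction m using Multiset.induction_on generalizing x with
  | empty => rfl
  | cons i m ih =>
    rw [Multiset.foldl_cons]
    exact (ih _).trans (value_step_le hg hv x i)

theorem antitone_value_foldl (hg : ∀ x i, g x i ∈ Set.Icc (0 : ℝ) 1)
    (hv : ∀ x, HasUniformValuePure q g x (v x)) (x : X) :
    Antitone fun m : Multiset I => v (m.foldl q x) := by
  intro m m' hm
  obtain ⟨u, rfl⟩ := Multiset.le_iff_exists_add.1 hm
  simpa only [Multiset.foldl_add] using value_foldl_le hg hv u (m.foldl q x)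

theorem play_eq_foldl (x : X) (a : ℕ → I) (t : ℕ) :
    play q x a t = Multiset.foldl q x ((List.range t).map a) := by
  rw [Multiset.coe_foldl]
  induction t with
  | zero => rfl
  | succ t ih => rw [List.range_succ, List.map_append, List.foldl_append, ← ih]; rfl

end MDP

theorem exists_eps_optimal_with_constant_value_general
    {X I : Type*} [Fintype I]
    (q : X → I → X) (g : X → I → ℝ)
    (hg : ∀ x i, g x i ∈ Set.Icc (0 : ℝ) 1)
    (hcomm : ∀ x i i', q (q x i) i' = q (q x i') i)
    (v : X → ℝ) (hv : ∀ x, HasUniformValuePure q g x (v x))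
    (x₁ : X) :
    ∀ ε > (0 : ℝ), ∃ a : ℕ → I,
      v x₁ - ε ≤ liminf (fun n => payoff q g x₁ a n) atTop ∧
      ∀ t : ℕ, v (play q x₁ a t) = v x₁ := by
  intro ε hε
  have : RightCommutative q := ⟨hcomm⟩
  obtain ⟨δ, hδ, hgap⟩ := (antitone_value_foldl hg hv x₁).exists_pos_forall_le_sub_of_lt (v x₁)
  obtain ⟨a, ha⟩ := (hv x₁).1 (min ε (δ / 2)) (lt_min hε (half_pos hδ))
  refine ⟨a, le_trans (by linarith [min_le_left ε (δ / 2)]) ha, fun t => ?_⟩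
  have hnear : v x₁ - min ε (δ / 2) ≤ v (play q x₁ a t) := by
    rw [← liminf_payoff_shift hg x₁ a t] at ha
    exact ha.trans (liminf_payoff_le hg (hv _) _)
  rw [play_eq_foldl] at hnear ⊢
  refine le_antisymm (value_foldl_le hg hv _ x₁) (not_lt.1 fun hlt => ?_)
  have hfar : v (Multiset.foldl q x₁ ((List.range t).map a)) ≤ v x₁ - δ := hgap _ hlt
  linarith [min_le_right ε (δ / 2)]

/-- In a deterministic commutative MDP having a uniform value in pure strategies at every
initial state, for every `ε > 0` there is an `ε`-optimal pure strategy along whose induced play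
the uniform value is constant. -/
theorem exists_eps_optimal_with_constant_value
    {X I : Type*} [Fintype I] [Nonempty I]
    (q : X → I → X) (g : X → I → ℝ)
    (hg : ∀ x i, g x i ∈ Set.Icc (0 : ℝ) 1)
    (hcomm : ∀ x i i', q (q x i) i' = q (q x i') i)
    (v : X → ℝ) (hv : ∀ x, HasUniformValuePure q g x (v x))
    (x₁ : X) :
    ∀ ε > (0 : ℝ), ∃ a : ℕ → I,
      v x₁ - ε ≤ liminf (fun n => payoff q g x₁ a n) atTop ∧
      ∀ t : ℕ, v (play q x₁ a t) = v x₁ :=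
  exists_eps_optimal_with_constant_value_general q g hg hcomm v hv x₁
end
end

section
/- Let X be a nonempty compact subset of ℝ^m with the ℓ¹ norm, I and J finite nonempty sets, q : X × I × J → X a deterministic transition such that q(·, i, j) is 1-Lipschitz for ‖·‖₁ for every (i,j), and g : X × I × J → [0,1] such that g(·, i, j) is continuous for every (i,j). Then for every ε > 0 there exists η > 0 such that: for every w ∈ ℝ and all x, x' ∈ X with ‖x − x'‖₁ ≤ η, if player 1 guarantees w in Γ(x) then player 1 guarantees w − ε in Γ(x'). -/
open Filter Topology

noncomputable section

/-- Expected total payoff over `n` stages in a deterministic two-player stochastic game, when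
player 1 uses the behavioral strategy `σ`, player 2 uses `τ`, the current state is `x` and the
past history (sequence of action pairs) is `h`. At each stage the two actions are drawn
independently according to `σ h` and `τ h`. -/
def expPay {X I J : Type*} [Fintype I] [Fintype J]
    (q : X → I → J → X) (g : X → I → J → ℝ)
    (σ : List (I × J) → PMF I) (τ : List (I × J) → PMF J) :
    ℕ → X → List (I × J) → ℝ
  | 0, _, _ => 0
  | n + 1, x, h => ∑ i : I, ∑ j : J, ((σ h) i).toReal * ((τ h) j).toReal *
      (g x i j + expPay q g σ τ n (q x i j) (h ++ [(i, j)]))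

/-- The `n`-stage average expected payoff `γ_n(x₁, σ, τ)`. -/
def gamePayoff {X I J : Type*} [Fintype I] [Fintype J]
    (q : X → I → J → X) (g : X → I → J → ℝ)
    (σ : List (I × J) → PMF I) (τ : List (I × J) → PMF J) (x₁ : X) (n : ℕ) : ℝ :=
  (1 / (n : ℝ)) * expPay q g σ τ n x₁ []

/-- Player 1 guarantees `w` in the game `Γ(x₁)`. -/
def Guarantees1 {X I J : Type*} [Fintype I] [Fintype J]
    (q : X → I → J → X) (g : X → I → J → ℝ) (x₁ : X) (w : ℝ) : Prop :=
  ∀ ε > (0 : ℝ), ∃ (σ : List (I × J) → PMF I) (N : ℕ),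
    ∀ (τ : List (I × J) → PMF J), ∀ n ≥ N, w - ε ≤ gamePayoff q g σ τ x₁ n

/-- Player 2 guarantees `w` in the game `Γ(x₁)`. -/
def Guarantees2 {X I J : Type*} [Fintype I] [Fintype J]
    (q : X → I → J → X) (g : X → I → J → ℝ) (x₁ : X) (w : ℝ) : Prop :=
  ∀ ε > (0 : ℝ), ∃ (τ : List (I × J) → PMF J) (N : ℕ),
    ∀ (σ : List (I × J) → PMF I), ∀ n ≥ N, gamePayoff q g σ τ x₁ n ≤ w + ε

lemma pmf_sum_toReal {I : Type*} [Fintype I] (p : PMF I) :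
    ∑ i : I, (p i).toReal = 1 := by
  have h := p.tsum_coe
  rw [tsum_fintype] at h
  rw [← ENNReal.toReal_sum (fun a _ => p.apply_ne_top a), h, ENNReal.toReal_one]

lemma expPay_diff_le {Y I J : Type*} [Fintype I] [Fintype J]
    (q : Y → I → J → Y) (g : Y → I → J → ℝ) (ε : ℝ) (hε : 0 ≤ ε)
    (R : Y → Y → Prop)
    (hq : ∀ i j x x', R x x' → R (q x i j) (q x' i j))
    (hg : ∀ i j x x', R x x' → |g x i j - g x' i j| ≤ ε)
    (σ : List (I × J) → PMF I) (τ : List (I × J) → PMF J) :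
    ∀ (n : ℕ) (h : List (I × J)) (x x' : Y), R x x' →
      |expPay q g σ τ n x h - expPay q g σ τ n x' h| ≤ n * ε := by
  intro n
  induction n with
  | zero => intro h x x' _; simp [expPay]
  | succ n ih =>
    intro h x x' hR
    have key : ∀ i j, |(((σ h) i).toReal * ((τ h) j).toReal *
          (g x i j + expPay q g σ τ n (q x i j) (h ++ [(i, j)]))) -
        (((σ h) i).toReal * ((τ h) j).toReal *
          (g x' i j + expPay q g σ τ n (q x' i j) (h ++ [(i, j)])))|
        ≤ ((σ h) i).toReal * ((τ h) j).toReal * ((n + 1) * ε) := by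
      intro i j
      have hnn : (0:ℝ) ≤ ((σ h) i).toReal * ((τ h) j).toReal := by positivity
      rw [← mul_sub, abs_mul, abs_of_nonneg hnn]
      apply mul_le_mul_of_nonneg_left _ hnn
      have h1 := hg i j x x' hR
      have h2 := ih (h ++ [(i, j)]) _ _ (hq i j x x' hR)
      calc |g x i j + expPay q g σ τ n (q x i j) (h ++ [(i, j)]) -
            (g x' i j + expPay q g σ τ n (q x' i j) (h ++ [(i, j)]))|
          ≤ |g x i j - g x' i j| + |expPay q g σ τ n (q x i j) (h ++ [(i, j)]) -
              expPay q g σ τ n (q x' i j) (h ++ [(i, j)])| := by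
            rw [add_sub_add_comm]; exact abs_add_le _ _
        _ ≤ ε + n * ε := add_le_add h1 h2
        _ = (n + 1) * ε := by ring
    calc |expPay q g σ τ (n+1) x h - expPay q g σ τ (n+1) x' h|
        = |∑ i : I, ∑ j : J, ((((σ h) i).toReal * ((τ h) j).toReal *
            (g x i j + expPay q g σ τ n (q x i j) (h ++ [(i, j)]))) -
          (((σ h) i).toReal * ((τ h) j).toReal *
            (g x' i j + expPay q g σ τ n (q x' i j) (h ++ [(i, j)]))))| := by
          simp [expPay, Finset.sum_sub_distrib]
      _ ≤ ∑ i : I, ∑ j : J, |(((σ h) i).toReal * ((τ h) j).toReal *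
            (g x i j + expPay q g σ τ n (q x i j) (h ++ [(i, j)]))) -
          (((σ h) i).toReal * ((τ h) j).toReal *
            (g x' i j + expPay q g σ τ n (q x' i j) (h ++ [(i, j)])))| := by
          apply (Finset.abs_sum_le_sum_abs _ _).trans
          exact Finset.sum_le_sum fun i _ => Finset.abs_sum_le_sum_abs _ _
      _ ≤ ∑ i : I, ∑ j : J, ((σ h) i).toReal * ((τ h) j).toReal * ((n + 1) * ε) := by
          exact Finset.sum_le_sum fun i _ => Finset.sum_le_sum fun j _ => key i j
      _ = (↑(n+1)) * ε := by
          simp_rw [mul_assoc, ← Finset.mul_sum, ← Finset.sum_mul,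
            pmf_sum_toReal (σ h), pmf_sum_toReal (τ h)]
          push_cast; ring

/-- In a deterministic stochastic game on a compact subset of `ℝ^m` with the `ℓ¹` norm, with a
`1`-Lipschitz transition and a continuous payoff: for every `ε > 0` there is `η > 0` such that
whatever player 1 guarantees at `x`, he guarantees up to `ε` at every `x'` with
`‖x - x'‖₁ ≤ η`. -/
theorem guarantee_continuous_in_state
    {m : ℕ} {I J : Type*} [Fintype I] [Nonempty I] [Fintype J] [Nonempty J]
    (X : Set (PiLp 1 fun _ : Fin m => ℝ)) (hXne : X.Nonempty) (hXc : IsCompact X)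
    (q : X → I → J → X)
    (hLip : ∀ i j, LipschitzWith 1 (fun x => q x i j))
    (g : X → I → J → ℝ)
    (hg01 : ∀ x i j, g x i j ∈ Set.Icc (0 : ℝ) 1)
    (hgc : ∀ i j, Continuous fun x => g x i j) :
    ∀ ε > (0 : ℝ), ∃ η > (0 : ℝ), ∀ (w : ℝ) (x x' : X), dist x x' ≤ η →
      Guarantees1 q g x w → Guarantees1 q g x' (w - ε) := by
  
  intro ε hε
  haveI : CompactSpace X := isCompact_iff_compactSpace.mp hXc
  have huc : ∀ (i : I) (j : J), ∃ δ > (0:ℝ), ∀ a b : X, dist a b < δ →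
      |g a i j - g b i j| < ε := by
    intro i j
    obtain ⟨δ, hδ, hδ2⟩ := Metric.uniformContinuous_iff.mp
      (CompactSpace.uniformContinuous_of_continuous (hgc i j)) ε hε
    exact ⟨δ, hδ, fun a b hab => by rw [← Real.dist_eq]; exact hδ2 hab⟩
  choose δ hδpos hδ using huc
  obtain ⟨i₀⟩ := ‹Nonempty I›
  obtain ⟨j₀⟩ := ‹Nonempty J›
  set D : ℝ := (Finset.univ.inf' Finset.univ_nonempty fun p : I × J => δ p.1 p.2) with hD
  have hDpos : 0 < D := by
    rw [hD]
    apply (Finset.lt_inf'_iff _).mpr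
    exact fun p _ => hδpos p.1 p.2
  refine ⟨D / 2, by positivity, ?_⟩
  intro w x x' hdist hG ε' hε'
  obtain ⟨σ, N, hσ⟩ := hG ε' hε'
  refine ⟨σ, N, ?_⟩
  intro τ n hn
  have hdiff : |gamePayoff q g σ τ x n - gamePayoff q g σ τ x' n| ≤ ε := by
    have hE := expPay_diff_le q g ε hε.le (fun a b => dist a b ≤ D / 2)
      (fun i j a b hab => by
        have h1 := (hLip i j).dist_le_mul a b
        simp only [NNReal.coe_one, one_mul] at h1
        exact h1.trans hab)
      (fun i j a b hab => by
        have hlt : dist a b < δ i j := by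
          refine lt_of_le_of_lt hab ?_
          calc D / 2 < D := by linarith
            _ ≤ δ i j := Finset.inf'_le _ (Finset.mem_univ (i, j))
        exact (hδ i j a b hlt).le)
      σ τ n [] x x' hdist
    unfold gamePayoff
    rw [← mul_sub, abs_mul]
    rcases Nat.eq_zero_or_pos n with h0 | hpos
    · subst h0; simp [expPay]; exact hε.le
    · have hn' : (0:ℝ) < n := by exact_mod_cast hpos
      calc |1 / (n:ℝ)| * |expPay q g σ τ n x [] - expPay q g σ τ n x' []|
          ≤ (1 / n) * (n * ε) := by
            apply mul_le_mul _ hE (abs_nonneg _) (by positivity)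
            rw [abs_of_nonneg (by positivity)]
        _ = ε := by field_simp
  have h1 := hσ τ n hn
  have := (abs_sub_le_iff.mp hdiff).1
  linarith
end
end
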